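/- Let D ⊆ ℝ² be a bounded open set, let r : ℝ → ℝ be 2π-periodic and Lipschitz continuous, let x₀ ∈ D, and let (x₀^k)_{k≥1} ⊆ D be a sequence of points with |x₀^k − x₀| → 0 as k → ∞. Then the Lebesgue measure of the symmetric difference A(r, x₀^k) Δ A(r, x₀) tends to 0 as k → ∞. -/

import Mathlib

open MeasureTheory Filter

/-- The angular polar coordinate of a point in the plane (the argument of the
corresponding complex number, taking values in `(-π, π]`). -/
noncomputable def polarAngle (x : EuclideanSpace ℝ (Fin 2)) : ℝ :=
  Complex.arg ⟨x 0, x 1⟩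

/-- The star-shaped inclusion `A(r, x₀) = {x ∈ D : |x − x₀| ≤ r(h(x − x₀))}`. -/
def starSet (D : Set (EuclideanSpace ℝ (Fin 2))) (r : ℝ → ℝ)
    (x₀ : EuclideanSpace ℝ (Fin 2)) : Set (EuclideanSpace ℝ (Fin 2)) :=
  {x | x ∈ D ∧ ‖x - x₀‖ ≤ r (polarAngle (x - x₀))}

/-!
Each inclusion `A(r, c)` is `D` intersected with the translate by `c` of one fixed body
`{y | ‖y‖ ≤ r (h y)}`, which is measurable and bounded because `r` is continuous and `h` takes
values in `[-π, π]`. Intersecting with `D` can only shrink a symmetric difference, and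
translation is continuous in measure on sets of finite Haar measure.
-/

open scoped symmDiff Topology

theorem MeasureTheory.tendsto_measure_symmDiff_preimage_sub_right {G α : Type*}
    [AddGroup G] [TopologicalSpace G] [IsTopologicalAddGroup G]
    [MeasurableSpace G] [BorelSpace G] {μ : Measure G} [μ.IsAddRightInvariant]
    [μ.InnerRegularCompactLTTop] [IsLocallyFiniteMeasure μ]
    {s : Set G} (hs : NullMeasurableSet s μ) (hμs : μ s ≠ ⊤)
    {l : Filter α} {c : α → G} {c₀ : G} (hc : Tendsto c l (𝓝 c₀)) :
    Tendsto (fun a ↦ μ (((fun x ↦ x - c a) ⁻¹' s) ∆ ((fun x ↦ x - c₀) ⁻¹' s))) l (𝓝 0) := by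
  let translate : C(G, C(G, G)) := ContinuousMap.curry ⟨fun p ↦ p.2 - p.1, by fun_prop⟩
  exact tendsto_measure_symmDiff_preimage_nhds_zero (f := fun a ↦ translate (c a))
    (g := translate c₀) ((translate.continuous.tendsto c₀).comp hc)
    (.of_forall fun a ↦ measurePreserving_sub_right μ (c a))
    (measurePreserving_sub_right μ c₀) hs hμs

theorem measurable_polarAngle : Measurable polarAngle :=
  Complex.measurable_arg.comp <| Complex.measurableEquivRealProd.symm.measurable.comp
    (by fun_prop : Measurable fun x : EuclideanSpace ℝ (Fin 2) ↦ (x 0, x 1))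

def starBody (r : ℝ → ℝ) : Set (EuclideanSpace ℝ (Fin 2)) :=
  {y | ‖y‖ ≤ r (polarAngle y)}

theorem starSet_eq_inter_preimage (D : Set (EuclideanSpace ℝ (Fin 2))) (r : ℝ → ℝ)
    (c : EuclideanSpace ℝ (Fin 2)) :
    starSet D r c = D ∩ (fun x ↦ x - c) ⁻¹' starBody r :=
  rfl

theorem measurableSet_starBody {r : ℝ → ℝ} (hr : Measurable r) :
    MeasurableSet (starBody r) :=
  measurableSet_le measurable_norm (hr.comp measurable_polarAngle)

theorem isBounded_starBody {r : ℝ → ℝ} (hr : Continuous r) :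
    Bornology.IsBounded (starBody r) := by
  obtain ⟨R, hR⟩ := (isCompact_Icc (a := -Real.pi) (b := Real.pi)).bddAbove_image hr.continuousOn
  refine (Metric.isBounded_closedBall (x := 0) (r := R)).subset fun y hy ↦ ?_
  have hangle : polarAngle y ∈ Set.Icc (-Real.pi) Real.pi :=
    ⟨(Complex.neg_pi_lt_arg _).le, Complex.arg_le_pi _⟩
  rw [mem_closedBall_zero_iff]
  exact hy.trans (hR ⟨_, hangle, rfl⟩)

theorem stmt5_general (D : Set (EuclideanSpace ℝ (Fin 2)))
    (r : ℝ → ℝ)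
    (K : NNReal) (hrlip : LipschitzWith K r)
    (x₀ : EuclideanSpace ℝ (Fin 2))
    (x₀k : ℕ → EuclideanSpace ℝ (Fin 2))
    (hconv : Tendsto x₀k atTop (nhds x₀)) :
    Tendsto (fun k => volume (symmDiff (starSet D r (x₀k k)) (starSet D r x₀)))
      atTop (nhds 0) := by
  have hbody := tendsto_measure_symmDiff_preimage_sub_right
    (measurableSet_starBody hrlip.continuous.measurable).nullMeasurableSet
    ((isBounded_starBody hrlip.continuous).measure_lt_top (μ := volume)).ne hconv
  refine tendsto_of_tendsto_of_tendsto_of_le_of_le tendsto_const_nhds hbody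
    (fun _ ↦ zero_le) fun k ↦ measure_mono ?_
  simp only [starSet_eq_inter_preimage, ← Set.inter_symmDiff_distrib_left]
  exact Set.inter_subset_right

theorem stmt5 (D : Set (EuclideanSpace ℝ (Fin 2))) (hDopen : IsOpen D)
    (hDbdd : Bornology.IsBounded D)
    (r : ℝ → ℝ) (hrper : Function.Periodic r (2 * Real.pi))
    (K : NNReal) (hrlip : LipschitzWith K r)
    (x₀ : EuclideanSpace ℝ (Fin 2)) (hx₀ : x₀ ∈ D)
    (x₀k : ℕ → EuclideanSpace ℝ (Fin 2)) (hx₀k : ∀ k, x₀k k ∈ D)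
    (hconv : Tendsto x₀k atTop (nhds x₀)) :
    Tendsto (fun k => volume (symmDiff (starSet D r (x₀k k)) (starSet D r x₀)))
      atTop (nhds 0) :=
  stmt5_general D r K hrlip x₀ x₀k hconv
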